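/- (Cardinality reduction for the Wyner–Ziv strong converse exponent) For finite alphabets X, Y, Z and any joint distribution P_{ŨX̃ỸZ̃} on U×X×Y×Z with arbitrary finite U, there exists a joint distribution P_{Ũ'X̃ỸZ̃} on U'×X×Y×Z with |U'| ≤ |X||Y||Z| + 1 having the same marginal P_{X̃ỸZ̃}, the same value of I(Ũ ∧ Ỹ|X̃) + I(Z̃ ∧ X̃|Ũ,Ỹ), and the same value of I(Ũ ∧ X̃) − I(Ũ ∧ Ỹ). -/

import Mathlib

open Real Finset
open scoped Classical

noncomputable section

/-- Shannon entropy (base 2) of a pmf on a finite type. -/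
def ent {S : Type*} [Fintype S] (p : S → ℝ) : ℝ :=
  - ∑ s, p s * Real.logb 2 (p s)

/-- Pushforward pmf under a map. -/
def push {S T : Type*} [Fintype S] [Fintype T] (p : S → ℝ) (f : S → T) : T → ℝ :=
  fun t => ∑ s, if f s = t then p s else 0

/-- Entropy of the random variable `f` under joint pmf `p`. -/
def entOf {S T : Type*} [Fintype S] [Fintype T] (p : S → ℝ) (f : S → T) : ℝ :=
  ent (push p f)

/-- Conditional entropy `H(f | g)` under joint pmf `p`. -/
def condEnt {S T V : Type*} [Fintype S] [Fintype T] [Fintype V]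
    (p : S → ℝ) (f : S → T) (g : S → V) : ℝ :=
  entOf p (fun s => (f s, g s)) - entOf p g

/-- Mutual information `I(f ∧ g)` under joint pmf `p`. -/
def miOf {S T V : Type*} [Fintype S] [Fintype T] [Fintype V]
    (p : S → ℝ) (f : S → T) (g : S → V) : ℝ :=
  entOf p f + entOf p g - entOf p (fun s => (f s, g s))

/-- Conditional mutual information `I(f ∧ g | h)` under joint pmf `p`. -/
def cmiOf {S T V W : Type*} [Fintype S] [Fintype T] [Fintype V] [Fintype W]
    (p : S → ℝ) (f : S → T) (g : S → V) (h : S → W) : ℝ :=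
  condEnt p f h + condEnt p g h - condEnt p (fun s => (f s, g s)) h

/-- Kullback–Leibler divergence (base 2). -/
def kl {S : Type*} [Fintype S] (p q : S → ℝ) : ℝ :=
  ∑ s, p s * Real.logb 2 (p s / q s)

end

/-!
Write `P_{ŨX̃ỸZ̃}` as the mixture, with weights `P_Ũ(u)`, of the conditional laws
`r_u = P_{X̃ỸZ̃|Ũ=u}`. By the chain rule `H(Ũ, f(A)) = H(Ũ) + ∑ᵤ P_Ũ(u) H(f(A) | Ũ = u)`, the
marginal `P_{X̃ỸZ̃}` and both information quantities depend only on the averages over `u` of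
`r_u`, `g₁(r_u)` and `g₂(r_u)`, where `g₁ = H(Z̃|Ỹ) − H(Z̃|X̃,Ỹ) − H(Ỹ|X̃)` and `g₂ = H(Ỹ) − H(X̃)`.
So it suffices to write `∑ᵤ P_Ũ(u) (r_u, g₁ r_u, g₂ r_u)` as a convex combination of
`|X||Y||Z| + 1` points of `{(r, g₁ r, g₂ r) | r in the simplex}`. This set is connected and lies in
the hyperplane `∑ r = 1` of a space of dimension `|X||Y||Z| + 2`, so Fenchel–Eggleston applies:
Carathéodory gives a positive combination `∑ wᵢ zᵢ` of a basis `z` of points of the set; writing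
another point `s` of the set as `∑ bᵢ zᵢ`, the index maximizing `bᵢ / wᵢ` can be exchanged for `s`,
and by connectedness some `s` has two maximizing indices, so one exchange kills two weights.
-/

open Function Module

theorem IsPreconnected.exists_two_maximizers {α ι β : Type*} [TopologicalSpace α] [Finite ι]
    [LinearOrder β] [TopologicalSpace β] [OrderClosedTopology β]
    {S : Set α} (hS : IsPreconnected S) {f : ι → α → β} (hf : ∀ i, Continuous (f i))
    {i₁ i₂ : ι} (hi : i₁ ≠ i₂) {x₁ x₂ : α} (hx₁ : x₁ ∈ S) (hx₂ : x₂ ∈ S)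
    (h₁ : ∀ k, f k x₁ ≤ f i₁ x₁) (h₂ : ∀ k, f k x₂ ≤ f i₂ x₂) :
    ∃ x ∈ S, ∃ i j, i ≠ j ∧ (∀ k, f k x ≤ f i x) ∧ ∀ k, f k x ≤ f j x := by
  let A : ι → Set α := fun i => {x | ∀ k, f k x ≤ f i x}
  have hA : ∀ i, IsClosed (A i) := fun i => by
    simpa only [A, Set.ofPred_forall] using isClosed_iInter fun k => isClosed_le (hf k) (hf i)
  have hcover : S ⊆ A i₁ ∪ ⋃ j ∈ {j | j ≠ i₁}, A j := by
    intro x _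
    have : Nonempty ι := ⟨i₁⟩
    obtain ⟨i, hi⟩ := Finite.exists_max (f · x)
    by_cases h : i = i₁
    · exact Or.inl (h ▸ hi)
    · exact Or.inr (Set.mem_biUnion h hi)
  obtain ⟨x, hxS, hx₁, hx⟩ := isPreconnected_closed_iff.1 hS _ _ (hA i₁)
    ((Set.toFinite _).isClosed_biUnion fun j _ => hA j) hcover
    ⟨x₁, hx₁, h₁⟩ ⟨x₂, hx₂, Set.mem_biUnion (Ne.symm hi) h₂⟩
  obtain ⟨j, hj, hxj⟩ := Set.mem_iUnion₂.1 hx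
  exact ⟨x, hxS, i₁, j, Ne.symm hj, hx₁, hxj⟩

theorem LinearMap.map_sum_smul_of_forall_eq_one {k V ι : Type*} [CommSemiring k] [AddCommMonoid V]
    [Module k V] (φ : V →ₗ[k] k) {z : ι → V} (hz : ∀ i, φ (z i) = 1) (s : Finset ι) (c : ι → k) :
    φ (∑ i ∈ s, c i • z i) = ∑ i ∈ s, c i := by
  simp [hz]

theorem AffineIndependent.linearIndependent_of_forall_eq_one {k V ι : Type*} [Field k]
    [AddCommGroup V] [Module k V] {z : ι → V} (hz : AffineIndependent k z) (φ : V →ₗ[k] k)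
    (hφ : ∀ i, φ (z i) = 1) : LinearIndependent k z :=
  linearIndependent_iff'.2 fun s g hg => hz.eq_zero_of_sum_eq_zero
    (by simpa [φ.map_sum_smul_of_forall_eq_one hφ] using congrArg φ hg) hg

theorem Function.extend_apply_mem {α β γ : Type*} {f : α → β} {g : α → γ} {d : β → γ}
    {s : Set γ} (hg : ∀ a, g a ∈ s) (hd : ∀ b, d b ∈ s) (b : β) : extend f g d b ∈ s := by
  rw [extend_def]
  split_ifs
  exacts [hg _, hd _]

theorem Function.Injective.sum_extend_smul_extend {α κ k W : Type*} [Fintype α] [Fintype κ]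
    [Semiring k] [AddCommMonoid W] [Module k W] {e : α → κ} (he : Injective e)
    (c : α → k) (z : α → W) (d : κ → W) :
    ∑ i, extend e c 0 i • extend e z d i = ∑ a, c a • z a :=
  (Fintype.sum_of_injective e he _ _
    (fun i hi => by rw [extend_apply' _ _ _ hi, Pi.zero_apply, zero_smul])
    fun a => by simp only [he.extend_apply]).symm

theorem sum_update_smul_update_eq {ι W : Type*} [Fintype ι] [DecidableEq ι] [AddCommGroup W]
    [Module ℝ W] (w b : ι → ℝ) (z : ι → W) {m : ℝ} (hm : m ≠ 0) {i : ι} (hi : b i = m * w i) :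
    ∑ k, update (fun k => w k - m⁻¹ * b k) i m⁻¹ k • update z i (∑ k, b k • z k) k
      = ∑ k, w k • z k := by
  have hwi : w i - m⁻¹ * b i = 0 := by rw [hi, inv_mul_cancel_left₀ hm, sub_self]
  calc ∑ k, update (fun k => w k - m⁻¹ * b k) i m⁻¹ k • update z i (∑ k, b k • z k) k
      = ∑ k, update (fun k => (w k - m⁻¹ * b k) • z k) i (m⁻¹ • ∑ k, b k • z k) k :=
        sum_congr rfl fun k _ => by rcases eq_or_ne k i with rfl | hki <;> simp [update_of_ne, *]
    _ = m⁻¹ • ∑ k, b k • z k + ∑ k, (w k - m⁻¹ * b k) • z k := by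
        rw [sum_update_of_mem (mem_univ i), sdiff_singleton_eq_erase,
          sum_erase _ (by rw [hwi, zero_smul])]
    _ = ∑ k, w k • z k := by
        simp only [sub_smul, sum_sub_distrib, mul_smul, ← smul_sum]
        abel

section FenchelEggleston

variable {W : Type*} [NormedAddCommGroup W] [NormedSpace ℝ W] [FiniteDimensional ℝ W]

theorem exists_sum_smul_eq_with_zero_weight (φ : W →ₗ[ℝ] ℝ) {S : Set W}
    (hS : IsPreconnected S) (hφ : ∀ s ∈ S, φ s = 1) {ι : Type*} [Fintype ι] [Nontrivial ι]
    {z : ι → W} (hzS : ∀ i, z i ∈ S) (hz : LinearIndependent ℝ z)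
    (hcard : Fintype.card ι = finrank ℝ W) {w : ι → ℝ} (hw : ∀ i, 0 < w i) :
    ∃ (w' : ι → ℝ) (z' : ι → W), (∀ k, 0 ≤ w' k) ∧ (∀ k, z' k ∈ S) ∧
      ∑ k, w' k • z' k = ∑ k, w k • z k ∧ ∃ j, w' j = 0 := by
  let B := basisOfLinearIndependentOfCardEqFinrank hz hcard
  have hB : ⇑B = z := coe_basisOfLinearIndependentOfCardEqFinrank hz hcard
  let f : ι → W → ℝ := fun k s => B.coord k s / w k
  have hf : ∀ k, Continuous (f k) := fun k =>
    (B.coord k).continuous_of_finiteDimensional.div_const _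
  have hfz : ∀ i k, f k (z i) ≤ f i (z i) := by
    intro i k
    rcases eq_or_ne k i with rfl | hki
    · rfl
    · simp only [f, ← hB, B.coord_apply, B.repr_self, Finsupp.single_apply, if_neg hki.symm,
        zero_div]
      exact (one_div_pos.2 (hw i)).le
  obtain ⟨i₁, i₂, h₁₂⟩ := exists_pair_ne ι
  obtain ⟨s, hs, i, j, hij, hi, hj⟩ :=
    hS.exists_two_maximizers hf h₁₂ (hzS i₁) (hzS i₂) (hfz i₁) (hfz i₂)
  set b : ι → ℝ := fun k => B.coord k s
  set m := f i s
  have hs_eq : s = ∑ k, b k • z k := by simpa [b, hB] using (B.sum_repr s).symm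
  have hb_sum : ∑ k, b k = 1 := by
    rw [← φ.map_sum_smul_of_forall_eq_one (fun k => hφ _ (hzS k)), ← hs_eq, hφ s hs]
  have hb_le : ∀ k, b k ≤ m * w k := fun k => (div_le_iff₀ (hw k)).1 (hi k)
  have hm : 0 < m := by
    by_contra! h
    have := sum_le_sum fun k (_ : k ∈ univ) =>
      (hb_le k).trans (mul_nonpos_of_nonpos_of_nonneg h (hw k).le)
    simp only [hb_sum, sum_const_zero] at this
    linarith
  have hbi : b i = m * w i := (div_eq_iff (hw i).ne').1 rfl
  -- exchanging `z i` for `s` also kills the weight `w j - m⁻¹ * b j` of `z j`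
  refine ⟨update (fun k => w k - m⁻¹ * b k) i m⁻¹, update z i s, fun k => ?_, fun k => ?_,
    ?_, j, ?_⟩
  · rcases eq_or_ne k i with rfl | hki
    · simpa using hm.le
    · rw [update_of_ne hki, sub_nonneg, inv_mul_le_iff₀ hm]
      exact hb_le k
  · rcases eq_or_ne k i with rfl | hki
    · simpa using hs
    · simpa [update_of_ne hki] using hzS k
  · rw [hs_eq]
    exact sum_update_smul_update_eq w b z hm.ne' hbi
  · have hbj : b j = m * w j := (div_eq_iff (hw j).ne').1 (le_antisymm (hi j) (hj i))
    rw [update_of_ne hij.symm, hbj, inv_mul_cancel_left₀ hm.ne', sub_self]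

theorem exists_finset_card_lt_finrank_of_mem_convexHull (φ : W →ₗ[ℝ] ℝ) {S : Set W}
    (hS : IsPreconnected S) (hφ : ∀ s ∈ S, φ s = 1) (hW : 1 < finrank ℝ W) {x : W}
    (hx : x ∈ convexHull ℝ S) :
    ∃ t : Finset W, ↑t ⊆ S ∧ t.card < finrank ℝ W ∧ x ∈ convexHull ℝ (t : Set W) := by
  obtain ⟨ι, _, z, w, hzS, hz, hw, hw1, rfl⟩ := eq_pos_convex_span_of_mem_convexHull hx
  have hzS : ∀ i, z i ∈ S := fun i => hzS ⟨i, rfl⟩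
  have hφz : ∀ i, φ (z i) = 1 := fun i => hφ _ (hzS i)
  have hli := hz.linearIndependent_of_forall_eq_one φ hφz
  have hmem : ∀ (s : Finset ι) (c : ι → ℝ) (y : ι → W), (∀ i ∈ s, 0 ≤ c i) →
      ∑ i ∈ s, c i = 1 → ∑ i ∈ s, c i • y i ∈ convexHull ℝ ↑(s.image y) :=
    fun s c y h₀ h₁ => (convex_convexHull ℝ _).sum_mem h₀ h₁ fun i hi =>
      subset_convexHull ℝ _ (mem_image_of_mem y hi)
  rcases hli.fintype_card_le_finrank.lt_or_eq with hlt | heq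
  · refine ⟨univ.image z, ?_, card_image_le.trans_lt hlt, hmem _ _ _ (fun i _ => (hw i).le) hw1⟩
    rw [coe_image]
    exact Set.image_subset_iff.2 fun i _ => hzS i
  · have : Nontrivial ι := Fintype.one_lt_card_iff_nontrivial.1 (heq ▸ hW)
    obtain ⟨w', z', hw', hz'S, hsum, j, hj⟩ :=
      exists_sum_smul_eq_with_zero_weight φ hS hφ hzS hli heq hw
    have hw'1 : ∑ i, w' i = 1 := by
      rw [← φ.map_sum_smul_of_forall_eq_one (fun i => hφ _ (hz'S i)), hsum,
        φ.map_sum_smul_of_forall_eq_one hφz, hw1]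
    refine ⟨(univ.erase j).image z', ?_, ?_, ?_⟩
    · rw [coe_image]
      exact Set.image_subset_iff.2 fun i _ => hz'S i
    · exact card_image_le.trans_lt (heq ▸ card_erase_lt_of_mem (mem_univ j))
    · rw [← hsum, ← sum_erase _ (by rw [hj, zero_smul])]
      exact hmem _ _ _ (fun i _ => hw' i) (by rw [sum_erase _ hj, hw'1])

theorem exists_sum_smul_eq_of_mem_convexHull (φ : W →ₗ[ℝ] ℝ) {S : Set W}
    (hS : IsPreconnected S) (hφ : ∀ s ∈ S, φ s = 1) (hW : 1 < finrank ℝ W) {κ : Type*}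
    [Fintype κ] (hκ : finrank ℝ W ≤ Fintype.card κ + 1) {x : W} (hx : x ∈ convexHull ℝ S) :
    ∃ (μ : κ → ℝ) (z : κ → W), (∀ k, 0 ≤ μ k) ∧ (∀ k, z k ∈ S) ∧ ∑ k, μ k • z k = x := by
  obtain ⟨t, htS, htcard, hxt⟩ := exists_finset_card_lt_finrank_of_mem_convexHull φ hS hφ hW hx
  obtain ⟨c, hc, -, hcx⟩ := Finset.mem_convexHull'.1 hxt
  obtain ⟨y₀, hy₀⟩ := convexHull_nonempty_iff.1 ⟨x, hxt⟩
  obtain ⟨e⟩ : Nonempty (t ↪ κ) := Function.Embedding.nonempty_of_card_le (by simp; omega)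
  refine ⟨extend e (fun y => c y) 0, extend e (fun y => y) fun _ => y₀, fun k => ?_, fun k => ?_, ?_⟩
  · exact extend_apply_mem (g := fun y : t => c y) (s := Set.Ici 0) (fun y => hc y y.2)
      (fun _ => le_refl (0 : ℝ)) k
  · exact extend_apply_mem (fun y : t => htS y.2) (fun _ => htS hy₀) k
  rw [e.injective.sum_extend_smul_extend, ← hcx]
  exact sum_coe_sort t fun y => c y • y

end FenchelEggleston

section Entropy

variable {S T T' V F : Type*} [Fintype S] [Fintype T] [Fintype T'] [Fintype V] [Fintype F]

theorem ent_eq_sum_negMulLog (p : S → ℝ) : ent p = (∑ s, negMulLog (p s)) / log 2 := by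
  simp only [ent, negMulLog, logb, neg_mul, sum_neg_distrib, neg_div, sum_div, mul_div_assoc]

theorem push_apply (p : S → ℝ) (f : S → T) (t : T) : push p f t = ∑ s with f s = t, p s :=
  (sum_filter _ _).symm

@[fun_prop]
theorem continuous_entOf (f : S → T) : Continuous fun p : S → ℝ => entOf p f := by
  simp only [entOf, ent_eq_sum_negMulLog, push_apply]
  fun_prop

theorem sum_push (p : S → ℝ) (f : S → T) : ∑ t, push p f t = ∑ s, p s := by
  simp only [push]
  rw [sum_comm]
  simp

theorem push_comp (p : S → ℝ) (f : S → T) (g : T → T') :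
    push p (fun s => g (f s)) = push (push p f) g := by
  funext c
  simp only [push_apply]
  convert (sum_fiberwise_eq_sum_filter univ {t | g t = c} f p).symm using 2
  simp

theorem entOf_comp (p : S → ℝ) (f : S → T) (g : T → T') :
    entOf p (fun s => g (f s)) = entOf (push p f) g := by
  rw [entOf, push_comp, entOf]

theorem ent_push_of_injective (p : S → ℝ) {e : S → T} (he : Injective e) :
    ent (push p e) = ent p := by
  simp only [ent_eq_sum_negMulLog]
  congr 1
  refine (Fintype.sum_of_injective e he _ _ (fun t ht => ?_) fun s => ?_).symm
  · simp [push_apply, filter_eq_empty_iff.2 fun s _ hs => ht ⟨s, hs⟩]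
  · simp [push, he.eq_iff]

theorem entOf_comp_of_injective (p : S → ℝ) (f : S → T) {e : T → T'} (he : Injective e) :
    entOf p (fun s => e (f s)) = entOf p f := by
  rw [entOf_comp, entOf, ent_push_of_injective _ he, entOf]

def compProd (l : V → ℝ) (r : V → F → ℝ) : V × F → ℝ := fun s => l s.1 * r s.1 s.2

theorem ent_compProd (l : V → ℝ) (r : V → F → ℝ) (hr : ∀ v, ∑ a, r v a = 1) :
    ent (compProd l r) = ent l + ∑ v, l v * ent (r v) := by
  simp only [ent_eq_sum_negMulLog, compProd, Fintype.sum_prod_type, negMulLog_mul, sum_add_distrib,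
    ← sum_mul, hr, ← mul_sum, one_mul, add_div, sum_div, mul_div_assoc]

theorem push_compProd_map (l : V → ℝ) (r : V → F → ℝ) (f : F → T) :
    push (compProd l r) (fun s => (s.1, f s.2)) = compProd l (fun v => push (r v) f) := by
  funext ⟨v, t⟩
  simp [push, compProd, Fintype.sum_prod_type, ite_and, mul_sum]

theorem push_compProd_snd (l : V → ℝ) (r : V → F → ℝ) :
    push (compProd l r) (fun s => s.2) = ∑ v, l v • r v := by
  funext a
  simp [push, compProd, Fintype.sum_prod_type]

theorem entOf_compProd (l : V → ℝ) (r : V → F → ℝ) (hr : ∀ v, ∑ a, r v a = 1) (f : F → T)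
    {e : V × T → T'} (he : Injective e) :
    entOf (compProd l r) (fun s => e (s.1, f s.2)) = ent l + ∑ v, l v * entOf (r v) f := by
  refine (entOf_comp_of_injective _ (fun s : V × F => (s.1, f s.2)) he).trans ?_
  rw [entOf, push_compProd_map, ent_compProd _ _ fun v => (sum_push _ _).trans (hr v)]
  rfl

end Entropy

noncomputable section WynerZiv

variable {V X Y Z : Type*} [Fintype V] [Fintype X] [Fintype Y] [Fintype Z]

def wzRate (q : V × X × Y × Z → ℝ) : ℝ :=
  cmiOf q (fun s => s.1) (fun s => s.2.2.1) (fun s => s.2.1)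
    + cmiOf q (fun s => s.2.2.2) (fun s => s.2.1) (fun s => (s.1, s.2.2.1))

def wzGap (q : V × X × Y × Z → ℝ) : ℝ :=
  miOf q (fun s => s.1) (fun s => s.2.1) - miOf q (fun s => s.1) (fun s => s.2.2.1)

-- The functionals `g₁` and `g₂` of the support-lemma argument, applied to `P_{X̃ỸZ̃|Ũ=u}`.
def wzRateTerm (r : X × Y × Z → ℝ) : ℝ :=
  condEnt r (fun a => a.2.2) (fun a => a.2.1) - condEnt r (fun a => a.2.2) (fun a => (a.1, a.2.1))
    - condEnt r (fun a => a.2.1) (fun a => a.1)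

def wzGapTerm (r : X × Y × Z → ℝ) : ℝ :=
  entOf r (fun a => a.2.1) - entOf r (fun a => a.1)

theorem wzRate_compProd (l : V → ℝ) (r : V → X × Y × Z → ℝ) (hr : ∀ v, ∑ a, r v a = 1) :
    wzRate (compProd l r) = condEnt (∑ v, l v • r v) (fun a => a.2.1) (fun a => a.1)
      + ∑ v, l v * wzRateTerm (r v) := by
  set q := compProd l r
  have hUX : entOf q (fun s => (s.1, s.2.1)) = ent l + ∑ v, l v * entOf (r v) (fun a => a.1) :=
    entOf_compProd l r hr (fun a => a.1) (e := id) injective_id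
  have hUY : entOf q (fun s => (s.1, s.2.2.1))
      = ent l + ∑ v, l v * entOf (r v) (fun a => a.2.1) :=
    entOf_compProd l r hr (fun a => a.2.1) (e := id) injective_id
  have hUYX : entOf q (fun s => ((s.1, s.2.2.1), s.2.1))
      = ent l + ∑ v, l v * entOf (r v) (fun a => (a.2.1, a.1)) :=
    entOf_compProd l r hr (fun a => (a.2.1, a.1)) (e := fun w => ((w.1, w.2.1), w.2.2))
      fun _ _ h => by simp_all [Prod.ext_iff]
  have hZUY : entOf q (fun s => (s.2.2.2, (s.1, s.2.2.1)))
      = ent l + ∑ v, l v * entOf (r v) (fun a => (a.2.2, a.2.1)) :=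
    entOf_compProd l r hr (fun a => (a.2.2, a.2.1)) (e := fun w => (w.2.1, (w.1, w.2.2)))
      fun _ _ h => by simp_all [Prod.ext_iff]
  have hXUY : entOf q (fun s => (s.2.1, (s.1, s.2.2.1)))
      = ent l + ∑ v, l v * entOf (r v) (fun a => (a.1, a.2.1)) :=
    entOf_compProd l r hr (fun a => (a.1, a.2.1)) (e := fun w => (w.2.1, (w.1, w.2.2)))
      fun _ _ h => by simp_all [Prod.ext_iff]
  have hZXUY : entOf q (fun s => ((s.2.2.2, s.2.1), (s.1, s.2.2.1)))
      = ent l + ∑ v, l v * entOf (r v) (fun a => (a.2.2, (a.1, a.2.1))) :=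
    entOf_compProd l r hr (fun a => (a.2.2, (a.1, a.2.1)))
      (e := fun w => ((w.2.1, w.2.2.1), (w.1, w.2.2.2))) fun _ _ h => by simp_all [Prod.ext_iff]
  have hX : entOf q (fun s => s.2.1) = entOf (push q (fun s => s.2)) (fun a => a.1) :=
    entOf_comp q (fun s => s.2) (fun a => a.1)
  have hYX : entOf q (fun s => (s.2.2.1, s.2.1))
      = entOf (push q (fun s => s.2)) (fun a => (a.2.1, a.1)) :=
    entOf_comp q (fun s => s.2) (fun a => (a.2.1, a.1))
  simp only [wzRate, cmiOf, condEnt, wzRateTerm]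
  rw [hUX, hUY, hUYX, hZUY, hXUY, hZXUY, hX, hYX, push_compProd_snd]
  simp only [mul_sub, sum_sub_distrib]
  ring

theorem wzGap_compProd (l : V → ℝ) (r : V → X × Y × Z → ℝ) (hr : ∀ v, ∑ a, r v a = 1) :
    wzGap (compProd l r) = entOf (∑ v, l v • r v) (fun a => a.1)
      - entOf (∑ v, l v • r v) (fun a => a.2.1) + ∑ v, l v * wzGapTerm (r v) := by
  set q := compProd l r
  have hUX : entOf q (fun s => (s.1, s.2.1)) = ent l + ∑ v, l v * entOf (r v) (fun a => a.1) :=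
    entOf_compProd l r hr (fun a => a.1) (e := id) injective_id
  have hUY : entOf q (fun s => (s.1, s.2.2.1))
      = ent l + ∑ v, l v * entOf (r v) (fun a => a.2.1) :=
    entOf_compProd l r hr (fun a => a.2.1) (e := id) injective_id
  have hX : entOf q (fun s => s.2.1) = entOf (push q (fun s => s.2)) (fun a => a.1) :=
    entOf_comp q (fun s => s.2) (fun a => a.1)
  have hY : entOf q (fun s => s.2.2.1) = entOf (push q (fun s => s.2)) (fun a => a.2.1) :=
    entOf_comp q (fun s => s.2) (fun a => a.2.1)
  simp only [wzGap, miOf, wzGapTerm]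
  rw [hUX, hUY, hX, hY, push_compProd_snd]
  simp only [mul_sub, sum_sub_distrib]
  ring

end WynerZiv

section SupportLemma

variable {F : Type*} [Fintype F]

theorem exists_stdSimplex_mixture_eq {U κ E : Type*} [Nonempty F] [Fintype U] [Fintype κ]
    [NormedAddCommGroup E] [NormedSpace ℝ E] [FiniteDimensional ℝ E] (hE : 0 < finrank ℝ E)
    (hκ : Fintype.card F + finrank ℝ E ≤ Fintype.card κ + 1) {G : (F → ℝ) → E}
    (hG : Continuous G) {l : U → ℝ} (hl : ∀ u, 0 ≤ l u) (hl1 : ∑ u, l u = 1) {r : U → F → ℝ}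
    (hr : ∀ u, r u ∈ stdSimplex ℝ F) :
    ∃ (μ : κ → ℝ) (ρ : κ → F → ℝ), (∀ k, 0 ≤ μ k) ∧ (∀ k, ρ k ∈ stdSimplex ℝ F) ∧
      ∑ k, μ k • ρ k = ∑ u, l u • r u ∧ ∑ k, μ k • G (ρ k) = ∑ u, l u • G (r u) := by
  let S := (fun ρ => (ρ, G ρ)) '' stdSimplex ℝ F
  have hS : IsPreconnected S :=
    (convex_stdSimplex ℝ F).isPreconnected.image _ (continuous_id.prodMk hG).continuousOn
  let φ : (F → ℝ) × E →ₗ[ℝ] ℝ := (∑ a, LinearMap.proj a) ∘ₗ LinearMap.fst ℝ (F → ℝ) E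
  have hφ : ∀ s ∈ S, φ s = 1 := by
    rintro _ ⟨ρ, hρ, rfl⟩
    simpa [φ] using hρ.2
  have hfin : finrank ℝ ((F → ℝ) × E) = Fintype.card F + finrank ℝ E := by
    simp [Module.finrank_prod]
  have hx : ∑ u, l u • (r u, G (r u)) ∈ convexHull ℝ S :=
    (convex_convexHull ℝ S).sum_mem (fun u _ => hl u) hl1 fun u _ =>
      subset_convexHull ℝ S ⟨r u, hr u, rfl⟩
  obtain ⟨μ, z, hμ, hzS, hz⟩ := exists_sum_smul_eq_of_mem_convexHull φ hS hφ
    (by rw [hfin]; have := Fintype.card_pos (α := F); omega) (hfin ▸ hκ) hx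
  choose ρ hρ hρz using hzS
  refine ⟨μ, ρ, hμ, hρ, ?_, ?_⟩
  · simpa [← hρz, Prod.fst_sum] using congrArg Prod.fst hz
  · simpa [← hρz, Prod.snd_sum] using congrArg Prod.snd hz

theorem exists_eq_compProd {U : Type*} [Fintype U] [Nonempty F] {p : U × F → ℝ}
    (hp : ∀ s, 0 ≤ p s) :
    ∃ r : U → F → ℝ, (∀ u, r u ∈ stdSimplex ℝ F) ∧ p = compProd (fun u => ∑ a, p (u, a)) r := by
  obtain ⟨a₀⟩ := ‹Nonempty F›
  set l := fun u => ∑ a, p (u, a)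
  refine ⟨fun u => if l u = 0 then Pi.single a₀ 1 else fun a => p (u, a) / l u, fun u => ?_, ?_⟩
  · beta_reduce
    split_ifs with hu
    · exact single_mem_stdSimplex ℝ a₀
    · exact ⟨fun a => div_nonneg (hp _) (sum_nonneg fun a _ => hp _), by rw [← sum_div, div_self hu]⟩
  · funext ⟨u, a⟩
    simp only [compProd]
    split_ifs with hu
    · have : p (u, a) ≤ l u := single_le_sum (fun a _ => hp (u, a)) (mem_univ a)
      rw [hu, zero_mul]
      linarith [hp (u, a)]
    · rw [mul_div_cancel₀ _ hu]

end SupportLemma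

theorem stmt17 {U X Y Z : Type*} [Fintype U] [Fintype X] [Fintype Y] [Fintype Z]
    (p : U × X × Y × Z → ℝ) (hp : ∀ s, 0 ≤ p s) (hp1 : ∑ s, p s = 1) :
    ∃ q : Fin (Fintype.card X * Fintype.card Y * Fintype.card Z + 1) × X × Y × Z → ℝ,
      (∀ s, 0 ≤ q s) ∧ (∑ s, q s = 1)
      ∧ (∀ a : X × Y × Z, push q (fun s => s.2) a = push p (fun s => s.2) a)
      ∧ cmiOf q (fun s => s.1) (fun s => s.2.2.1) (fun s => s.2.1)
          + cmiOf q (fun s => s.2.2.2) (fun s => s.2.1) (fun s => (s.1, s.2.2.1))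
        = cmiOf p (fun s => s.1) (fun s => s.2.2.1) (fun s => s.2.1)
          + cmiOf p (fun s => s.2.2.2) (fun s => s.2.1) (fun s => (s.1, s.2.2.1))
      ∧ miOf q (fun s => s.1) (fun s => s.2.1) - miOf q (fun s => s.1) (fun s => s.2.2.1)
        = miOf p (fun s => s.1) (fun s => s.2.1) - miOf p (fun s => s.1) (fun s => s.2.2.1) := by
  have : Nonempty (X × Y × Z) := by
    by_contra h
    simp [not_nonempty_iff.1 h] at hp1
  obtain ⟨r, hr, hpeq⟩ := exists_eq_compProd hp
  set l := fun u => ∑ a, p (u, a)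
  obtain ⟨μ, ρ, hμ, hρ, hmarg, hG⟩ := exists_stdSimplex_mixture_eq
    (κ := Fin (Fintype.card X * Fintype.card Y * Fintype.card Z + 1)) (E := ℝ × ℝ)
    (by simp [Module.finrank_prod]) (by simp [Module.finrank_prod, mul_assoc])
    (G := fun r => (wzRateTerm r, wzGapTerm r)) (by unfold wzRateTerm wzGapTerm condEnt; fun_prop)
    (fun u => sum_nonneg fun a _ => hp (u, a)) (by rw [← hp1, Fintype.sum_prod_type]) hr
  have hpush : push (compProd μ ρ) (fun s => s.2) = push p (fun s => s.2) := by
    rw [hpeq, push_compProd_snd, push_compProd_snd, hmarg]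
  have hG₁ : ∑ k, μ k * wzRateTerm (ρ k) = ∑ u, l u * wzRateTerm (r u) := by
    simpa [Prod.fst_sum] using congrArg Prod.fst hG
  have hG₂ : ∑ k, μ k * wzGapTerm (ρ k) = ∑ u, l u * wzGapTerm (r u) := by
    simpa [Prod.snd_sum] using congrArg Prod.snd hG
  refine ⟨compProd μ ρ, fun s => mul_nonneg (hμ _) ((hρ _).1 _), ?_, fun a => congrFun hpush a,
    ?_, ?_⟩
  · rw [← sum_push _ (fun s => s.2), hpush, sum_push, hp1]
  · change wzRate _ = wzRate p
    rw [hpeq, wzRate_compProd _ _ fun k => (hρ k).2, wzRate_compProd _ _ fun u => (hr u).2,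
      hmarg, hG₁]
  · change wzGap _ = wzGap p
    rw [hpeq, wzGap_compProd _ _ fun k => (hρ k).2, wzGap_compProd _ _ fun u => (hr u).2,
      hmarg, hG₂]
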